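/- arXiv:0906.2825 — 4 statements merged into one kernel-verified Lean document; each statement's English description precedes it below -/
import Mathlib

section
/- Let H be Hermitian, R positive semidefinite Hermitian, Q = I - R, and A(z) = I + z H + z² Q. If z₀ lies on the unit circle and u satisfies A(z₀) u = 0, then u also satisfies A(conj z₀) u = 0. -/
open Matrix ComplexOrder

/-!
For `|z| = 1` we have `z z̄ = 1`, hence `z² A(z̄) = A(z) + (z² - 1) R`, while `A(z̄) = A(z)ᴴ`.
If `A(z) u = 0` then `u* A(z̄) u = (A(z) u)* u = 0`, so the identity gives `(z² - 1) u* R u = 0`.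
Since `R ≥ 0`, `u* R u = 0` forces `R u = 0`; either way `(z² - 1) R u = 0`, and the identity
applied to `u` yields `z² A(z̄) u = 0`.
-/

section QuadraticPencil

variable {R A : Type*} [CommRing R] [Ring A] [Algebra R A]

def quadPencil (H Q : A) (z : R) : A := 1 + z • H + z ^ 2 • Q

theorem sq_smul_quadPencil_of_mul_eq_one (H Q : A) {z w : R} (hzw : z * w = 1) :
    z ^ 2 • quadPencil H Q w = quadPencil H Q z + (z ^ 2 - 1) • (1 - Q) := by
  unfold quadPencil
  linear_combination (norm := module) hzw • (z • H + (z * w + 1) • Q)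

theorem star_quadPencil [StarRing R] [StarRing A] [StarModule R A] {H Q : A}
    (hH : IsSelfAdjoint H) (hQ : IsSelfAdjoint Q) (z : R) :
    star (quadPencil H Q z) = quadPencil H Q (star z) := by
  simp only [quadPencil, star_add, star_one, star_smul, star_pow, hH.star_eq, hQ.star_eq]

end QuadraticPencil

theorem Matrix.conjTranspose_mulVec_eq_zero_of_smul_conjTranspose_eq {𝕜 n : Type*} [RCLike 𝕜]
    [Fintype n] {A P : Matrix n n 𝕜} (hP : P.PosSemidef) {c d : 𝕜} (hd : d ≠ 0)
    (hA : d • Aᴴ = A + c • P) {u : n → 𝕜} (hu : A *ᵥ u = 0) : Aᴴ *ᵥ u = 0 := by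
  have hquad : star u ⬝ᵥ Aᴴ *ᵥ u = 0 := by
    rw [dotProduct_mulVec, vecMul_conjTranspose, star_star, hu, star_zero, zero_dotProduct]
  have hsmul : d • Aᴴ *ᵥ u = c • P *ᵥ u := by
    rw [← smul_mulVec, hA, add_mulVec, hu, zero_add, smul_mulVec]
  have hPu : c • P *ᵥ u = 0 := by
    have hcq : c * (star u ⬝ᵥ P *ᵥ u) = 0 := by
      rw [← smul_eq_mul, ← dotProduct_smul, ← hsmul, dotProduct_smul, hquad, smul_zero]
    rcases mul_eq_zero.mp hcq with hc | hq
    · rw [hc, zero_smul]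
    · rw [(hP.dotProduct_mulVec_zero_iff u).mp hq, smul_zero]
  exact (smul_eq_zero.mp (hsmul.trans hPu)).resolve_left hd

theorem stmt_3 {n : ℕ}
    (H R : Matrix (Fin n) (Fin n) ℂ)
    (hH : H.IsHermitian) (hR : R.PosSemidef)
    (z₀ : ℂ) (hz : ‖z₀‖ = 1)
    (u : Fin n → ℂ)
    (heq : (1 + z₀ • H + z₀ ^ 2 • (1 - R)).mulVec u = 0) :
    (1 + (starRingEnd ℂ z₀) • H + (starRingEnd ℂ z₀) ^ 2 • (1 - R)).mulVec u = 0 := by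
  have hz₀ : z₀ ≠ 0 := norm_ne_zero_iff.mp (hz ▸ one_ne_zero)
  have hzw : z₀ * starRingEnd ℂ z₀ = 1 := by
    rw [Complex.mul_conj, Complex.normSq_eq_norm_sq, hz]; norm_num
  have hstar : (quadPencil H (1 - R) z₀)ᴴ = quadPencil H (1 - R) (starRingEnd ℂ z₀) :=
    star_quadPencil hH.isSelfAdjoint (isHermitian_one.sub hR.isHermitian).isSelfAdjoint z₀
  have hkey :
      z₀ ^ 2 • (quadPencil H (1 - R) z₀)ᴴ = quadPencil H (1 - R) z₀ + (z₀ ^ 2 - 1) • R := by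
    rw [hstar, sq_smul_quadPencil_of_mul_eq_one H (1 - R) hzw, sub_sub_cancel]
  change (quadPencil H (1 - R) (starRingEnd ℂ z₀)) *ᵥ u = 0
  rw [← hstar]
  exact conjTranspose_mulVec_eq_zero_of_smul_conjTranspose_eq hR (pow_ne_zero 2 hz₀) hkey heq
end

section
/- Let H be Hermitian, R positive semidefinite, Q = I - R, and suppose u ≠ 0 with (I + z₀ H + z₀² Q) u = 0 for some z₀ on the unit circle with z₀ ≠ ±1 (i.e., z₀ not real). Then u is an eigenvector of H with eigenvalue -(z₀ + 1/z₀), and this eigenvalue is real with absolute value at most 2. -/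
/-!
Dividing the equation by `z₀` gives `H u = z₀ R u - (z₀ + z₀⁻¹) u`, where `z₀ + z₀⁻¹ = 2 Re z₀` is
real because `z₀⁻¹ = conj z₀`. Pairing with `u`, the numbers `u*Hu`, `u*Ru` and `u*u` are real, so
the imaginary part of the identity reads `Im z₀ · u*Ru = 0`. As `z₀` is not real, `u*Ru = 0`, hence
`R u = 0` since `R` is positive semidefinite, and the eigenvalue equation follows.
-/

open Matrix ComplexOrder

lemma Complex.im_ne_zero_of_norm_eq_one {z : ℂ} (hz : ‖z‖ = 1) (h1 : z ≠ 1) (h2 : z ≠ -1) :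
    z.im ≠ 0 := by
  intro him
  have hre : z = (z.re : ℂ) := Complex.ext rfl (by simp [him])
  rw [hre, Complex.norm_real, Real.norm_eq_abs] at hz
  rcases abs_eq (zero_le_one' ℝ) |>.mp hz with h | h
  · exact h1 (by rw [hre, h]; simp)
  · exact h2 (by rw [hre, h]; simp)

lemma Complex.im_add_inv_eq_zero_of_norm_eq_one {z : ℂ} (hz : ‖z‖ = 1) : (z + z⁻¹).im = 0 := by
  rw [Complex.inv_eq_conj hz, Complex.add_conj]
  simp

lemma Complex.norm_add_inv_le_two_of_norm_eq_one {z : ℂ} (hz : ‖z‖ = 1) : ‖z + z⁻¹‖ ≤ 2 :=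
  calc ‖z + z⁻¹‖ ≤ ‖z‖ + ‖z⁻¹‖ := norm_add_le _ _
    _ = 2 := by rw [norm_inv, hz]; norm_num

namespace Matrix

variable {ι : Type*} [Fintype ι]

lemma mulVec_eq_of_quadratic_mulVec_eq_zero [DecidableEq ι] {H R : Matrix ι ι ℂ} {z : ℂ}
    (hz : z ≠ 0) {u : ι → ℂ} (h : (1 + z • H + z ^ 2 • (1 - R)) *ᵥ u = 0) :
    H *ᵥ u = z • R *ᵥ u + (-(z + z⁻¹)) • u := by
  have h' : u + z • H *ᵥ u + z ^ 2 • (u - R *ᵥ u) = 0 := by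
    simpa only [add_mulVec, smul_mulVec, sub_mulVec, one_mulVec] using h
  apply smul_right_injective _ hz
  have hzz : z * (z + z⁻¹) = z ^ 2 + 1 := by field_simp
  simp only [smul_add, smul_smul, mul_neg, hzz]
  linear_combination (norm := module) h'

lemma mulVec_eq_zero_of_mulVec_eq_smul_add {H R : Matrix ι ι ℂ} (hH : H.IsHermitian)
    (hR : R.PosSemidef) {z c : ℂ} (hz : z.im ≠ 0) (hc : c.im = 0) {u : ι → ℂ}
    (h : H *ᵥ u = z • R *ᵥ u + c • u) : R *ᵥ u = 0 := by
  have hHu := hH.im_star_dotProduct_mulVec_self u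
  have hRu := hR.isHermitian.im_star_dotProduct_mulVec_self u
  have huu : (star u ⬝ᵥ u).im = 0 :=
    (Complex.nonneg_iff.mp (dotProduct_star_self_nonneg u)).2.symm
  rw [RCLike.im_to_complex] at hHu hRu
  rw [h, dotProduct_add, dotProduct_smul, dotProduct_smul, smul_eq_mul, smul_eq_mul] at hHu
  simp only [Complex.add_im, Complex.mul_im, hc, huu, hRu, mul_zero, zero_mul, add_zero,
    zero_add] at hHu
  have hre : (star u ⬝ᵥ R *ᵥ u).re = 0 := (mul_eq_zero.mp hHu).resolve_left hz
  exact (hR.dotProduct_mulVec_zero_iff u).mp (Complex.ext hre hRu)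

end Matrix

theorem stmt_4_general {n : ℕ}
    (H R : Matrix (Fin n) (Fin n) ℂ)
    (hH : H.IsHermitian) (hR : R.PosSemidef)
    (z₀ : ℂ) (hz : ‖z₀‖ = 1) (hz1 : z₀ ≠ 1) (hz2 : z₀ ≠ -1)
    (u : Fin n → ℂ)
    (heq : (1 + z₀ • H + z₀ ^ 2 • (1 - R)).mulVec u = 0) :
    H.mulVec u = (-(z₀ + z₀⁻¹)) • u ∧
    (-(z₀ + z₀⁻¹)).im = 0 ∧ ‖(-(z₀ + z₀⁻¹))‖ ≤ 2 := by
  have hz0 : z₀ ≠ 0 := norm_ne_zero_iff.mp (by rw [hz]; exact one_ne_zero)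
  have hreal : (-(z₀ + z₀⁻¹)).im = 0 := by
    rw [Complex.neg_im, Complex.im_add_inv_eq_zero_of_norm_eq_one hz, neg_zero]
  have hHu := mulVec_eq_of_quadratic_mulVec_eq_zero hz0 heq
  have hRu : R *ᵥ u = 0 := mulVec_eq_zero_of_mulVec_eq_smul_add hH hR
    (Complex.im_ne_zero_of_norm_eq_one hz hz1 hz2) hreal hHu
  refine ⟨by rw [hHu, hRu, smul_zero, zero_add], hreal, ?_⟩
  rw [norm_neg]
  exact Complex.norm_add_inv_le_two_of_norm_eq_one hz

theorem stmt_4 {n : ℕ}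
    (H R : Matrix (Fin n) (Fin n) ℂ)
    (hH : H.IsHermitian) (hR : R.PosSemidef)
    (z₀ : ℂ) (hz : ‖z₀‖ = 1) (hz1 : z₀ ≠ 1) (hz2 : z₀ ≠ -1)
    (u : Fin n → ℂ) (hu : u ≠ 0)
    (heq : (1 + z₀ • H + z₀ ^ 2 • (1 - R)).mulVec u = 0) :
    H.mulVec u = (-(z₀ + z₀⁻¹)) • u ∧
    (-(z₀ + z₀⁻¹)).im = 0 ∧ ‖(-(z₀ + z₀⁻¹))‖ ≤ 2 :=
  stmt_4_general H R hH hR z₀ hz hz1 hz2 u heq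
end

section
/- Block form of cutting k tails: let S = [[T,U],[V,W]] be a unitary (m+k)×(m+k) matrix with |z| = 1 and I + z²W invertible. Then S^c = T - z² U (I + z² W)⁻¹ V is unitary. -/
open Matrix ComplexOrder

/-!
Feed the lower output of the isometry `S = [[T, U], [V, W]]` back into its lower input through a
unitary `G`: if `Y = V + W G Y`, then `S [1; G Y] = [X; Y]` with `X = T + U G Y`. Comparing Gram
matrices of both sides, `1 + Yᴴ Y = Xᴴ X + Yᴴ Y`, so `X` is an isometry. The theorem is the case
`G = -z² • 1`, `Y = (1 + z² W)⁻¹ V`; for square matrices an isometry is unitary.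
-/

namespace Matrix

variable {R m n k l : Type*} [Fintype m] [Fintype k]

lemma conjTranspose_fromRows_mul_self [Ring R] [StarRing R]
    (A : Matrix m n R) (B : Matrix k n R) :
    (fromRows A B)ᴴ * fromRows A B = Aᴴ * A + Bᴴ * B := by
  rw [conjTranspose_fromRows_eq_fromCols_conjTranspose, fromCols_mul_fromRows]

lemma feedback_conjTranspose_mul_self_eq_one [Ring R] [StarRing R]
    [Fintype n] [Fintype l] [DecidableEq n] [DecidableEq k] [DecidableEq l]
    {T : Matrix m n R} {U : Matrix m l R} {V : Matrix k n R} {W : Matrix k l R}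
    {G : Matrix l k R} {Y : Matrix k n R} (hS : (fromBlocks T U V W)ᴴ * fromBlocks T U V W = 1)
    (hG : Gᴴ * G = 1) (hY : V + W * (G * Y) = Y) :
    (T + U * (G * Y))ᴴ * (T + U * (G * Y)) = 1 := by
  set X := T + U * (G * Y)
  set E := fromRows (1 : Matrix n n R) (G * Y)
  have hSE : fromBlocks T U V W * E = fromRows X Y := by
    rw [fromBlocks_mul_fromRows, Matrix.mul_one, Matrix.mul_one, hY]
  refine add_right_cancel (b := Yᴴ * Y) ?_
  calc Xᴴ * X + Yᴴ * Y
      = Eᴴ * ((fromBlocks T U V W)ᴴ * fromBlocks T U V W) * E := by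
        rw [← conjTranspose_fromRows_mul_self, ← hSE, conjTranspose_mul]
        simp only [Matrix.mul_assoc]
    _ = 1 + Yᴴ * Y := by
        rw [hS, Matrix.mul_one, conjTranspose_fromRows_mul_self, conjTranspose_mul,
          Matrix.mul_assoc, ← Matrix.mul_assoc Gᴴ, hG, Matrix.one_mul, conjTranspose_one,
          Matrix.one_mul]

lemma scalar_feedback_conjTranspose_mul_self_eq_one [CommRing R] [StarRing R]
    [DecidableEq m] [DecidableEq k]
    {T : Matrix m m R} {U : Matrix m k R} {V : Matrix k m R} {W : Matrix k k R} {c : R}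
    (hS : (fromBlocks T U V W)ᴴ * fromBlocks T U V W = 1) (hc : star c * c = 1)
    (hB : IsUnit (1 + c • W)) :
    (T - c • (U * (1 + c • W)⁻¹ * V))ᴴ * (T - c • (U * (1 + c • W)⁻¹ * V)) = 1 := by
  set Y := (1 + c • W)⁻¹ * V
  have hBY : (1 + c • W) * Y = V := by
    rw [← Matrix.mul_assoc, mul_nonsing_inv _ ((isUnit_iff_isUnit_det _).mp hB), Matrix.one_mul]
  set G : Matrix k k R := (-c) • 1
  have hG : Gᴴ * G = 1 := by
    rw [conjTranspose_smul, conjTranspose_one, smul_mul_smul_comm, Matrix.one_mul, star_neg,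
      neg_mul_neg, hc, one_smul]
  have hGY : G * Y = -(c • Y) := by
    simp only [G, neg_smul, Matrix.neg_mul, smul_mul, Matrix.one_mul]
  have hY : V + W * (G * Y) = Y := by
    rw [hGY, ← hBY, Matrix.add_mul, Matrix.one_mul, smul_mul, Matrix.mul_neg, Matrix.mul_smul]
    abel
  have hX := feedback_conjTranspose_mul_self_eq_one hS hG hY
  rw [hGY, Matrix.mul_neg, Matrix.mul_smul, ← sub_eq_add_neg] at hX
  simpa only [Y, Matrix.mul_assoc] using hX

end Matrix

theorem stmt_13_general {m k : ℕ}
    (T : Matrix (Fin m) (Fin m) ℂ) (U : Matrix (Fin m) (Fin k) ℂ)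
    (V : Matrix (Fin k) (Fin m) ℂ) (W : Matrix (Fin k) (Fin k) ℂ)
    (hS2 : (Matrix.fromBlocks T U V W)ᴴ * Matrix.fromBlocks T U V W = 1)
    (z : ℂ) (hz : ‖z‖ = 1)
    (hW : IsUnit (1 + z ^ 2 • W)) :
    (T - z ^ 2 • (U * (1 + z ^ 2 • W)⁻¹ * V)) *
      (T - z ^ 2 • (U * (1 + z ^ 2 • W)⁻¹ * V))ᴴ = 1 ∧
    (T - z ^ 2 • (U * (1 + z ^ 2 • W)⁻¹ * V))ᴴ *
      (T - z ^ 2 • (U * (1 + z ^ 2 • W)⁻¹ * V)) = 1 := by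
  have hc : star (z ^ 2) * z ^ 2 = 1 := by
    rw [star_pow, ← mul_pow, RCLike.star_def, Complex.conj_mul', hz]
    norm_num
  have hX := scalar_feedback_conjTranspose_mul_self_eq_one hS2 hc hW
  exact ⟨mul_eq_one_comm.mp hX, hX⟩

theorem stmt_13 {m k : ℕ}
    (T : Matrix (Fin m) (Fin m) ℂ) (U : Matrix (Fin m) (Fin k) ℂ)
    (V : Matrix (Fin k) (Fin m) ℂ) (W : Matrix (Fin k) (Fin k) ℂ)
    (hS1 : Matrix.fromBlocks T U V W * (Matrix.fromBlocks T U V W)ᴴ = 1)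
    (hS2 : (Matrix.fromBlocks T U V W)ᴴ * Matrix.fromBlocks T U V W = 1)
    (z : ℂ) (hz : ‖z‖ = 1)
    (hW : IsUnit (1 + z ^ 2 • W)) :
    (T - z ^ 2 • (U * (1 + z ^ 2 • W)⁻¹ * V)) *
      (T - z ^ 2 • (U * (1 + z ^ 2 • W)⁻¹ * V))ᴴ = 1 ∧
    (T - z ^ 2 • (U * (1 + z ^ 2 • W)⁻¹ * V))ᴴ *
      (T - z ^ 2 • (U * (1 + z ^ 2 • W)⁻¹ * V)) = 1 :=
  stmt_13_general T U V W hS2 z hz hW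
end

section
/- Connecting two tails preserves unitarity: let S = [[T,U],[V,W]] be a unitary (n+2)×(n+2) matrix, |z| = 1, X the 2×2 Pauli X matrix, and assume zW - X is invertible. Then S̃ = T - z U (zW - X)⁻¹ V is unitary. -/
/-!
Write `K = (W - G)⁻¹`. Expanding `S̃ S̃ᴴ` with the block identities of `S Sᴴ = 1` leaves
`T Tᴴ + U (1 - (1 - K W)(1 - K W)ᴴ + K Kᴴ) Uᴴ`, and `1 - K W = -K G` with `G` unitary makes the
bracket collapse to `1`, so `S̃ S̃ᴴ = T Tᴴ + U Uᴴ = 1`; a one-sided inverse of a square matrix is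
two-sided. The claim is the case `G = z̄ X`, where `z (z W - X)⁻¹ = (W - G)⁻¹` since `z z̄ = 1`.
-/

open Matrix ComplexOrder

theorem mul_star_one_sub_mul_of_mul_sub_eq_one {R : Type*} [Ring R] [StarRing R] {k w g : R}
    (hk : k * (w - g) = 1) (hg : g * star g = 1) :
    (1 - k * w) * star (1 - k * w) = k * star k := by
  have hkw : 1 - k * w = -(k * g) := by rw [← hk]; noncomm_ring
  rw [hkw, star_neg, star_mul, neg_mul_neg, mul_assoc, ← mul_assoc g, hg, one_mul]

namespace Matrix

variable {R m l : Type*} [CommRing R] [StarRing R] [Fintype m] [Fintype l] [DecidableEq m]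
  [DecidableEq l]

theorem fromBlocks_mul_conjTranspose_eq_one_iff (T : Matrix m m R) (U : Matrix m l R)
    (V : Matrix l m R) (W : Matrix l l R) :
    fromBlocks T U V W * (fromBlocks T U V W)ᴴ = 1 ↔
      T * Tᴴ + U * Uᴴ = 1 ∧ T * Vᴴ + U * Wᴴ = 0 ∧ V * Tᴴ + W * Uᴴ = 0 ∧
        V * Vᴴ + W * Wᴴ = 1 := by
  rw [fromBlocks_conjTranspose, fromBlocks_multiply, ← fromBlocks_one, fromBlocks_inj]

/-- Closing the last `l` channels of the unitary `fromBlocks T U V W` through the unitary `G`. -/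
theorem sub_mul_inv_mul_mem_unitaryGroup {T : Matrix m m R} {U : Matrix m l R}
    {V : Matrix l m R} {W G : Matrix l l R} (hS : fromBlocks T U V W ∈ unitaryGroup (m ⊕ l) R)
    (hG : G ∈ unitaryGroup l R) (hWG : IsUnit (W - G)) :
    T - U * (W - G)⁻¹ * V ∈ unitaryGroup m R := by
  rw [mem_unitaryGroup_iff, star_eq_conjTranspose,
    fromBlocks_mul_conjTranspose_eq_one_iff] at hS
  obtain ⟨hTT, hTV, hVT, hVV⟩ := hS
  set K := (W - G)⁻¹
  have hK : K * (W - G) = 1 := nonsing_inv_mul _ ((isUnit_iff_isUnit_det _).mp hWG)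
  have hKW := mul_star_one_sub_mul_of_mul_sub_eq_one hK (mem_unitaryGroup_iff.mp hG)
  simp only [star_eq_conjTranspose] at hKW
  rw [mem_unitaryGroup_iff, star_eq_conjTranspose]
  calc (T - U * K * V) * (T - U * K * V)ᴴ
      = T * Tᴴ - (T * Vᴴ) * Kᴴ * Uᴴ - U * K * (V * Tᴴ) + U * K * (V * Vᴴ) * Kᴴ * Uᴴ := by
        simp only [conjTranspose_sub, conjTranspose_mul, Matrix.sub_mul, Matrix.mul_sub,
          Matrix.mul_assoc]
        abel
    _ = T * Tᴴ + U * (1 - (1 - K * W) * (1 - K * W)ᴴ + K * Kᴴ) * Uᴴ := by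
        rw [eq_neg_of_add_eq_zero_left hTV, eq_neg_of_add_eq_zero_left hVT,
          eq_sub_of_add_eq hVV]
        simp only [conjTranspose_sub, conjTranspose_mul, conjTranspose_one, Matrix.mul_add,
          Matrix.add_mul, Matrix.mul_sub, Matrix.sub_mul, Matrix.mul_neg, Matrix.neg_mul,
          Matrix.mul_one, Matrix.one_mul, Matrix.mul_assoc]
        abel
    _ = 1 := by rw [hKW, sub_add_cancel, Matrix.mul_one, hTT]

end Matrix

theorem stmt_14_general {n : ℕ}
    (T : Matrix (Fin n) (Fin n) ℂ) (U : Matrix (Fin n) (Fin 2) ℂ)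
    (V : Matrix (Fin 2) (Fin n) ℂ) (W : Matrix (Fin 2) (Fin 2) ℂ)
    (hS1 : Matrix.fromBlocks T U V W * (Matrix.fromBlocks T U V W)ᴴ = 1)
    (z : ℂ) (hz : ‖z‖ = 1)
    (hWX : IsUnit (z • W - !![0, 1; 1, 0])) :
    (T - z • (U * (z • W - !![0, 1; 1, 0])⁻¹ * V)) *
      (T - z • (U * (z • W - !![0, 1; 1, 0])⁻¹ * V))ᴴ = 1 ∧
    (T - z • (U * (z • W - !![0, 1; 1, 0])⁻¹ * V))ᴴ *
      (T - z • (U * (z • W - !![0, 1; 1, 0])⁻¹ * V)) = 1 := by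
  set X : Matrix (Fin 2) (Fin 2) ℂ := !![0, 1; 1, 0]
  set A := z • W - X
  have hzz : z * star z = 1 := by simp [Complex.mul_conj', hz]
  have hX : X ∈ unitaryGroup (Fin 2) ℂ := by
    rw [mem_unitaryGroup_iff, star_eq_conjTranspose]
    ext i j; fin_cases i <;> fin_cases j <;> simp [X, mul_apply, Fin.sum_univ_two]
  have hG : star z • X ∈ unitaryGroup (Fin 2) ℂ := by
    rw [mem_unitaryGroup_iff] at hX ⊢
    rw [star_smul, smul_mul_smul, star_star, mul_comm, hzz, hX, one_smul]
  have hWG : W - star z • X = star z • A := by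
    rw [smul_sub, smul_smul, mul_comm, hzz, one_smul]
  have hleft : z • A⁻¹ * (W - star z • X) = 1 := by
    rw [hWG, smul_mul_smul, hzz, nonsing_inv_mul _ ((isUnit_iff_isUnit_det _).mp hWX), one_smul]
  have hS : fromBlocks T U V W ∈ unitaryGroup (Fin n ⊕ Fin 2) ℂ := mem_unitaryGroup_iff.mpr hS1
  have hunit := sub_mul_inv_mul_mem_unitaryGroup hS hG
    ((isUnit_iff_isUnit_det _).mpr (isUnit_det_of_left_inverse hleft))
  rw [inv_eq_left_inv hleft, Matrix.mul_smul, Matrix.smul_mul] at hunit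
  exact ⟨mem_unitaryGroup_iff.mp hunit, mem_unitaryGroup_iff'.mp hunit⟩

theorem stmt_14 {n : ℕ}
    (T : Matrix (Fin n) (Fin n) ℂ) (U : Matrix (Fin n) (Fin 2) ℂ)
    (V : Matrix (Fin 2) (Fin n) ℂ) (W : Matrix (Fin 2) (Fin 2) ℂ)
    (hS1 : Matrix.fromBlocks T U V W * (Matrix.fromBlocks T U V W)ᴴ = 1)
    (hS2 : (Matrix.fromBlocks T U V W)ᴴ * Matrix.fromBlocks T U V W = 1)
    (z : ℂ) (hz : ‖z‖ = 1)
    (hWX : IsUnit (z • W - !![0, 1; 1, 0])) :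
    (T - z • (U * (z • W - !![0, 1; 1, 0])⁻¹ * V)) *
      (T - z • (U * (z • W - !![0, 1; 1, 0])⁻¹ * V))ᴴ = 1 ∧
    (T - z • (U * (z • W - !![0, 1; 1, 0])⁻¹ * V))ᴴ *
      (T - z • (U * (z • W - !![0, 1; 1, 0])⁻¹ * V)) = 1 :=
  stmt_14_general T U V W hS1 z hz hWX
end
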